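/- Let B ∈ ℂ^{m×n}, W ∈ ℂ^{n×m}, let k be a natural number with k = ind(BW), let H be the Moore–Penrose inverse of B, let G be the Moore–Penrose inverse of (B·W)^k, let X be a minimal rank W-weighted weak Drazin inverse of B, and let Q ∈ ℂ^{n×m} satisfy B·Q·B = B. Then the following are equivalent: (i) H·B·W·X·W = Q·B·W·X·W; (ii) Q·(B·W)^{k+1} = H·(B·W)^{k+1}; (iii) col(Q·(B·W)^{k+1}) = col(H·(B·W)^{k+1}); (iv) col(Q·(B·W)^{k+1}) ⊆ col(H·(B·W)^{k+1}); (v) there exists U ∈ ℂ^{n×m} such that Q = H + U·(I − (B·W)^k·G). -/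

import Mathlib

open Matrix

/-- The index of a square complex matrix: the least `j` with `rank (M^j) = rank (M^(j+1))`. -/
noncomputable def matIndex {p : ℕ} (M : Matrix (Fin p) (Fin p) ℂ) : ℕ :=
  sInf {j : ℕ | (M ^ j).rank = (M ^ (j + 1)).rank}

/-- The column space of a complex matrix: the range of `v ↦ M *ᵥ v`. -/
noncomputable def colSpace {a b : ℕ} (M : Matrix (Fin a) (Fin b) ℂ) :
    Submodule ℂ (Fin a → ℂ) :=
  LinearMap.range M.mulVecLin

/-- The null space of a complex matrix: the kernel of `v ↦ M *ᵥ v`. -/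
noncomputable def nullSpace {a b : ℕ} (M : Matrix (Fin a) (Fin b) ℂ) :
    Submodule ℂ (Fin b → ℂ) :=
  LinearMap.ker M.mulVecLin

lemma colSpace_mul_le {a b c : ℕ} (M : Matrix (Fin a) (Fin b) ℂ)
    (N : Matrix (Fin b) (Fin c) ℂ) : colSpace (M * N) ≤ colSpace M := by
  simp only [colSpace, Matrix.mulVecLin_mul]
  exact LinearMap.range_comp_le_range _ _

lemma exists_factor {a b c : ℕ} {M : Matrix (Fin a) (Fin c) ℂ}
    {N : Matrix (Fin a) (Fin b) ℂ} (h : colSpace M ≤ colSpace N) :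
    ∃ S : Matrix (Fin b) (Fin c) ℂ, M = N * S := by
  have hc : ∀ j : Fin c, ∃ s : Fin b → ℂ, N.mulVecLin s = fun i => M i j := by
    intro j
    have hmem : (fun i => M i j) ∈ colSpace M := by
      refine ⟨Pi.single j 1, ?_⟩
      simp [Matrix.mulVecLin]
      rfl
    exact h hmem
  choose s hs using hc
  refine ⟨Matrix.of fun i j => s j i, ?_⟩
  ext i j
  have := congrFun (hs j) i
  simpa [Matrix.mulVecLin, Matrix.mul_apply, Matrix.mulVec, dotProduct] using this.symm

lemma rank_eq_finrank_colSpace {a b : ℕ} (M : Matrix (Fin a) (Fin b) ℂ) :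
    M.rank = Module.finrank ℂ (colSpace M) := rfl

lemma colSpace_eq_of_le_of_rank_eq {a b c : ℕ} {M : Matrix (Fin a) (Fin b) ℂ}
    {N : Matrix (Fin a) (Fin c) ℂ} (h : colSpace M ≤ colSpace N)
    (hr : M.rank = N.rank) : colSpace M = colSpace N := by
  refine Submodule.eq_of_le_of_finrank_eq h ?_
  rw [← rank_eq_finrank_colSpace, ← rank_eq_finrank_colSpace]
  exact hr

/-- **Theorem 3.12.** Characterization of the inner inverses `Q` of `B` for which
`Q·B·W·X·W` is the W-weighted weak MPD inverse. -/
theorem weighted_weak_MPD_inner_inverse {m n : ℕ}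
    (B : Matrix (Fin m) (Fin n) ℂ) (W : Matrix (Fin n) (Fin m) ℂ)
    (k : ℕ) (hk : k = matIndex (B * W))
    (H : Matrix (Fin n) (Fin m) ℂ)
    (hH1 : B * H * B = B) (hH2 : H * B * H = H)
    (hH3 : (B * H)ᴴ = B * H) (hH4 : (H * B)ᴴ = H * B)
    (G : Matrix (Fin m) (Fin m) ℂ)
    (hG1 : (B * W) ^ k * G * (B * W) ^ k = (B * W) ^ k)
    (hG2 : G * (B * W) ^ k * G = G)
    (hG3 : ((B * W) ^ k * G)ᴴ = (B * W) ^ k * G)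
    (hG4 : (G * (B * W) ^ k)ᴴ = G * (B * W) ^ k)
    (X : Matrix (Fin m) (Fin n) ℂ)
    (hX1 : X * W * (B * W) ^ (k + 1) = (B * W) ^ k)
    (hX2 : X.rank = ((B * W) ^ k).rank)
    (Q : Matrix (Fin n) (Fin m) ℂ) (hQ : B * Q * B = B) :
    [ H * B * W * X * W = Q * B * W * X * W,
      Q * (B * W) ^ (k + 1) = H * (B * W) ^ (k + 1),
      colSpace (Q * (B * W) ^ (k + 1)) = colSpace (H * (B * W) ^ (k + 1)),
      colSpace (Q * (B * W) ^ (k + 1)) ≤ colSpace (H * (B * W) ^ (k + 1)),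
      ∃ U : Matrix (Fin n) (Fin m) ℂ, Q = H + U * (1 - (B * W) ^ k * G) ].TFAE := by
  have hX1' : X * (W * (B * W) ^ (k + 1)) = (B * W) ^ k := by
    rw [← Matrix.mul_assoc, hX1]
  -- rank (A^(k+1)) = rank (A^k)
  have hrank : ((B * W) ^ (k + 1)).rank = ((B * W) ^ k).rank := by
    refine le_antisymm ?_ ?_
    · rw [pow_succ]
      exact Matrix.rank_mul_le_left _ _
    · calc ((B * W) ^ k).rank = (X * (W * (B * W) ^ (k + 1))).rank := by rw [hX1']
        _ ≤ (W * (B * W) ^ (k + 1)).rank := Matrix.rank_mul_le_right _ _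
        _ ≤ ((B * W) ^ (k + 1)).rank := Matrix.rank_mul_le_right _ _
  -- colSpace (A^(k+1)) = colSpace (A^k)
  have hcol : colSpace ((B * W) ^ (k + 1)) = colSpace ((B * W) ^ k) := by
    refine colSpace_eq_of_le_of_rank_eq ?_ hrank
    rw [pow_succ]
    exact colSpace_mul_le _ _
  obtain ⟨T, hT⟩ : ∃ T, (B * W) ^ k = (B * W) ^ (k + 1) * T := exists_factor hcol.ge
  -- colSpace X = colSpace (A^k), so X = A^k * S
  have hXle : colSpace ((B * W) ^ k) ≤ colSpace X := by
    rw [← hX1']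
    exact colSpace_mul_le _ _
  have hXcol : colSpace ((B * W) ^ k) = colSpace X :=
    colSpace_eq_of_le_of_rank_eq hXle hX2.symm
  obtain ⟨S, hS⟩ : ∃ S, X = (B * W) ^ k * S := exists_factor hXcol.ge
  have hXG : (B * W) ^ k * G * X = X := by
    rw [hS, ← Matrix.mul_assoc, hG1]
  tfae_have 1 → 2 := by
    intro h1
    have e : ∀ Y : Matrix (Fin n) (Fin m) ℂ,
        Y * (B * W) ^ (k + 1) = Y * B * W * X * W * (B * W) ^ (k + 1) := by
      intro Y
      conv_lhs => rw [pow_succ', ← hX1]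
      simp only [Matrix.mul_assoc]
    rw [e Q, e H, ← h1]
  tfae_have 2 → 1 := by
    intro h2
    have e : ∀ Y : Matrix (Fin n) (Fin m) ℂ,
        Y * B * W * X * W = Y * (B * W) ^ (k + 1) * (G * (X * W)) := by
      intro Y
      conv_lhs => rw [← hXG]
      rw [pow_succ']
      simp only [Matrix.mul_assoc]
    rw [e H, e Q, ← h2]
  tfae_have 2 → 3 := by intro h2; rw [h2]
  tfae_have 3 → 4 := le_of_eq
  tfae_have 4 → 2 := by
    intro h4
    obtain ⟨S', hS'⟩ := exists_factor h4
    rw [Matrix.mul_assoc] at hS'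
    have hBQ : B * (Q * (B * W) ^ (k + 1)) = (B * W) ^ (k + 1) := by
      have e : B * (Q * (B * W) ^ (k + 1)) = B * Q * B * (W * (B * W) ^ k) := by
        rw [pow_succ']
        simp only [Matrix.mul_assoc]
      rw [e, hQ, ← Matrix.mul_assoc, ← pow_succ']
    have hBH : B * (H * ((B * W) ^ (k + 1) * S')) = (B * W) ^ (k + 1) * S' := by
      have e : B * (H * ((B * W) ^ (k + 1) * S')) = B * H * B * (W * ((B * W) ^ k * S')) := by
        rw [pow_succ']
        simp only [Matrix.mul_assoc]
      rw [e, hH1, pow_succ']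
      simp only [Matrix.mul_assoc]
    have hfix : (B * W) ^ (k + 1) = (B * W) ^ (k + 1) * S' :=
      calc (B * W) ^ (k + 1) = B * (Q * (B * W) ^ (k + 1)) := hBQ.symm
        _ = B * (H * ((B * W) ^ (k + 1) * S')) := by rw [hS']
        _ = (B * W) ^ (k + 1) * S' := hBH
    rw [hS', ← hfix]
  tfae_have 2 → 5 := by
    intro h2
    refine ⟨Q - H, ?_⟩
    have h1 : (Q - H) * (B * W) ^ (k + 1) = 0 := by
      rw [Matrix.sub_mul, h2, sub_self]
    have h2' : (Q - H) * (B * W) ^ k = 0 := by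
      rw [hT, ← Matrix.mul_assoc, h1, Matrix.zero_mul]
    have hz : (Q - H) * ((B * W) ^ k * G) = 0 := by
      rw [← Matrix.mul_assoc, h2', Matrix.zero_mul]
    rw [Matrix.mul_sub, Matrix.mul_one, hz, sub_zero]
    abel
  tfae_have 5 → 2 := by
    rintro ⟨U, rfl⟩
    have hGA : (B * W) ^ k * G * (B * W) ^ (k + 1) = (B * W) ^ (k + 1) := by
      conv_lhs => rw [pow_succ, ← Matrix.mul_assoc, hG1]
      rw [← pow_succ]
    rw [Matrix.add_mul, Matrix.mul_assoc U, Matrix.sub_mul, Matrix.one_mul, hGA, sub_self,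
      Matrix.mul_zero, add_zero]
  tfae_finish
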